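/- Let (X,φ) be a Smale space and let x ∈ X be an asymptotic p-periodic point for some p ∈ ℤ with p ≠ 0. Let p_s and p_u be the least positive asymptotic periods of η^s(x) and η^u(x), respectively. Then ω(x) = {η^s(x), φ(η^s(x)), …, φ^{p_s−1}(η^s(x))} and α(x) = {η^u(x), φ(η^u(x)), …, φ^{p_u−1}(η^u(x))}. -/

import Mathlib

open Filter Set Topology

noncomputable section

/-- Integer iterate of a homeomorphism. -/
def hIter {X : Type*} [TopologicalSpace X] (φ : X ≃ₜ X) (n : ℤ) (x : X) : X :=
  ((φ.toEquiv : Equiv.Perm X) ^ n) x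

/-- The cocycle sums `f^n` of a function `f : X → ℤ` along the iterates of `φ`:
`f^n(x) = Σ_{i=0}^{n-1} f(φ^i(x))` for `n > 0`, `f^0 = 0`, and
`f^n(x) = −Σ_{i=n}^{-1} f(φ^i(x))` for `n < 0`. -/
def cSum {X : Type*} [TopologicalSpace X] (φ : X ≃ₜ X) (f : X → ℤ) (n : ℤ) (x : X) : ℤ :=
  if 0 ≤ n then ∑ i ∈ Finset.range n.toNat, f (hIter φ i x)
  else -∑ i ∈ Finset.range (-n).toNat, f (hIter φ (n + i) x)

/-- Stable asymptotic pairs (limit definition). -/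
def asympS {X : Type*} [MetricSpace X] (φ : X ≃ₜ X) : Set (X × X) :=
  {p | Tendsto (fun n : ℕ => dist (hIter φ n p.1) (hIter φ n p.2)) atTop (nhds 0)}

/-- Unstable asymptotic pairs (limit definition). -/
def asympU {X : Type*} [MetricSpace X] (φ : X ≃ₜ X) : Set (X × X) :=
  {p | Tendsto (fun n : ℕ => dist (hIter φ (-(n : ℤ)) p.1) (hIter φ (-(n : ℤ)) p.2))
    atTop (nhds 0)}

/-- Asymptotic pairs (limit definition). -/
def asympA {X : Type*} [MetricSpace X] (φ : X ≃ₜ X) : Set (X × X) := asympS φ ∩ asympU φ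

/-- The `ω`-limit set of `x`. -/
def omegaSet {X : Type*} [MetricSpace X] (φ : X ≃ₜ X) (x : X) : Set X :=
  {z | ∃ n : ℕ → ℕ, StrictMono n ∧ Tendsto (fun i => hIter φ (n i) x) atTop (nhds z)}

/-- The `α`-limit set of `x`. -/
def alphaSet {X : Type*} [MetricSpace X] (φ : X ≃ₜ X) (x : X) : Set X :=
  {z | ∃ n : ℕ → ℤ, StrictAnti n ∧ Tendsto (fun i => hIter φ (n i) x) atTop (nhds z)}

/-- A Smale space structure on a compact metric space `X`. -/
structure SmaleSpace (X : Type*) [MetricSpace X] [CompactSpace X] where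
  phi : X ≃ₜ X
  eps : ℝ
  lam : ℝ
  br : X → X → X
  eps_pos : 0 < eps
  lam_pos : 0 < lam
  lam_lt_one : lam < 1
  br_cont : ContinuousOn (fun p : X × X => br p.1 p.2) {p : X × X | dist p.1 p.2 < eps}
  br_self : ∀ x : X, br x x = x
  br_assoc_left : ∀ x y z : X, dist x y < eps → dist (br x y) z < eps → dist x z < eps →
    br (br x y) z = br x z
  br_assoc_right : ∀ x y z : X, dist y z < eps → dist x (br y z) < eps → dist x z < eps →
    br x (br y z) = br x z
  phi_br : ∀ x y : X, dist x y < eps → dist (phi x) (phi y) < eps →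
    phi (br x y) = br (phi x) (phi y)
  contract_s : ∀ x y z : X, br y x = y → dist x y < eps → br z x = z → dist x z < eps →
    dist (phi y) (phi z) ≤ lam * dist y z
  contract_u : ∀ x y z : X, br x y = y → dist x y < eps → br x z = z → dist x z < eps →
    dist (phi.symm y) (phi.symm z) ≤ lam * dist y z

namespace SmaleSpace

variable {X Y : Type*} [MetricSpace X] [CompactSpace X] [MetricSpace Y] [CompactSpace Y]

/-- Local stable set `X^s(x,ε)`. -/
def Xs (S : SmaleSpace X) (x : X) (ε : ℝ) : Set X := {y | S.br y x = y ∧ dist x y < ε}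

/-- Local unstable set `X^u(x,ε)`. -/
def Xu (S : SmaleSpace X) (x : X) (ε : ℝ) : Set X := {y | S.br x y = y ∧ dist x y < ε}

def Gs0 (S : SmaleSpace X) : Set (X × X) := {p | p.2 ∈ S.Xs p.1 S.eps}

def Gu0 (S : SmaleSpace X) : Set (X × X) := {p | p.2 ∈ S.Xu p.1 S.eps}

/-- `G_φ^{s,n} = (φ×φ)^{-n}(G_φ^{s,0})`. -/
def GsN (S : SmaleSpace X) (n : ℤ) : Set (X × X) :=
  {p | (hIter S.phi n p.1, hIter S.phi n p.2) ∈ S.Gs0}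

/-- `G_φ^{u,n} = (φ×φ)^{n}(G_φ^{u,0})`. -/
def GuN (S : SmaleSpace X) (n : ℤ) : Set (X × X) :=
  {p | (hIter S.phi (-n) p.1, hIter S.phi (-n) p.2) ∈ S.Gu0}

def GaN (S : SmaleSpace X) (n : ℤ) : Set (X × X) := S.GsN n ∩ S.GuN n

/-- The asymptotic equivalence relation `G_φ^a = ⋃_{n ≥ 0} G_φ^{a,n}`. -/
def Ga (S : SmaleSpace X) : Set (X × X) := ⋃ n : ℕ, S.GaN n

lemma gaN_subset_ga (S : SmaleSpace X) (n : ℕ) : S.GaN n ⊆ S.Ga :=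
  Set.subset_iUnion (fun k : ℕ => S.GaN k) n

/-- The inductive limit topology on `G_φ^a`: a set is open iff its intersection with each
`G_φ^{a,n}` is open in the subspace topology from `X × X`. -/
def gaTopology (S : SmaleSpace X) : TopologicalSpace ↥S.Ga :=
  ⨆ n : ℕ, TopologicalSpace.coinduced (Set.inclusion (S.gaN_subset_ga n)) inferInstance

/-- Irreducibility of a Smale space. -/
def Irreducible (S : SmaleSpace X) : Prop :=
  ∀ U V : Set X, IsOpen U → U.Nonempty → IsOpen V → V.Nonempty →
    ∃ K : ℕ, ((hIter S.phi K '' U) ∩ V).Nonempty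

def IsPeriodicPoint (S : SmaleSpace X) (x : X) : Prop :=
  ∃ p : ℕ, 0 < p ∧ hIter S.phi p x = x

/-- `h` is a flip conjugacy between `(X,φ)` and `(Y,ψ)`. -/
def IsFlipConjugacy (S : SmaleSpace X) (T : SmaleSpace Y) (h : X ≃ₜ Y) : Prop :=
  (∀ x, h (S.phi x) = T.phi (h x)) ∨ (∀ x, h (S.phi x) = T.phi.symm (h x))

def FlipConjugate (S : SmaleSpace X) (T : SmaleSpace Y) : Prop :=
  ∃ h : X ≃ₜ Y, IsFlipConjugacy S T h

/-- An isomorphism of the principal étale groupoids `G_φ^a` and `G_ψ^a`: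
a bijection which is a homeomorphism for the inductive limit topologies and preserves
the (equivalence relation) groupoid structure. -/
structure GaIso (S : SmaleSpace X) (T : SmaleSpace Y) where
  toEquiv : ↥S.Ga ≃ ↥T.Ga
  cont : @Continuous _ _ S.gaTopology T.gaTopology toEquiv
  cont_symm : @Continuous _ _ T.gaTopology S.gaTopology toEquiv.symm
  map_mul : ∀ p q r : ↥S.Ga, (p : X × X).2 = (q : X × X).1 →
    (r : X × X) = ((p : X × X).1, (q : X × X).2) →
    (toEquiv p : Y × Y).2 = (toEquiv q : Y × Y).1 ∧
      (toEquiv r : Y × Y) = ((toEquiv p : Y × Y).1, (toEquiv q : Y × Y).2)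

end SmaleSpace

/-!
By continuity, `ys = lim φ^{|p|k}(x)` is fixed by `φ^{|p|}`, and two points fixed by a common
power of `φ` that are forward asymptotic must coincide; hence `ys` is genuinely `ps`-periodic.
Sorting the times of a convergent subsequence `φ^{n_i}(x)` by their residue `r` mod `|p|`
shows that its limit is `φ^r(ys)`, while `φ^{|p|k + r}(x) → φ^r(ys)` shows that every point of
the orbit of `ys` is reached. The `α`-limit set is the `ω`-limit set for `φ⁻¹`.
-/

section Iterates

variable {Z : Type*} [TopologicalSpace Z] (φ : Z ≃ₜ Z)

theorem hIter_eq_coe_zpow (n : ℤ) : hIter φ n = ⇑(φ ^ n) := by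
  have h := map_zpow (MonoidHom.mk' (fun f : Z ≃ₜ Z => (f.toEquiv : Equiv.Perm Z))
    fun _ _ => rfl) φ n
  funext x
  exact congrArg (fun e : Equiv.Perm Z => e x) h.symm

theorem continuous_hIter (n : ℤ) : Continuous (hIter φ n) := by
  rw [hIter_eq_coe_zpow]
  exact (φ ^ n).continuous

theorem hIter_add (m n : ℤ) (x : Z) : hIter φ (m + n) x = hIter φ m (hIter φ n x) := by
  simp only [hIter, zpow_add, Equiv.Perm.mul_apply]

theorem hIter_symm (n : ℤ) (x : Z) : hIter φ.symm n x = hIter φ (-n) x := by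
  rw [hIter, hIter, zpow_neg, ← inv_zpow]
  rfl

variable {φ}

theorem hIter_mul_eq_self {q : ℤ} {y : Z} (hy : hIter φ q y = y) (m : ℤ) :
    hIter φ (q * m) y = y := by
  rw [hIter, zpow_mul]
  exact Equiv.Perm.zpow_apply_eq_self_of_apply_eq_self hy m

theorem hIter_emod_eq {q : ℤ} {y : Z} (hy : hIter φ q y = y) (j : ℤ) :
    hIter φ (j % q) y = hIter φ j y := by
  conv_rhs => rw [← Int.emod_add_mul_ediv j q, hIter_add, hIter_mul_eq_self hy]

theorem setOf_hIter_Ico_eq_range {q : ℤ} (hq : 0 < q) {y : Z} (hy : hIter φ q y = y) :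
    {z | ∃ j : ℤ, 0 ≤ j ∧ j < q ∧ z = hIter φ j y} = range fun j : ℤ => hIter φ j y := by
  refine Subset.antisymm (fun z ⟨j, _, _, hz⟩ => ⟨j, hz.symm⟩) ?_
  rintro _ ⟨j, rfl⟩
  exact ⟨j % q, Int.emod_nonneg j hq.ne', Int.emod_lt_of_pos j hq, (hIter_emod_eq hy j).symm⟩

theorem range_hIter_symm (y : Z) :
    (range fun j : ℤ => hIter φ.symm j y) = range fun j : ℤ => hIter φ j y := by
  simp only [hIter_symm]
  exact neg_surjective.range_comp fun j => hIter φ j y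

theorem tendsto_hIter_mul_add {P : ℤ} {x y : Z}
    (h : Tendsto (fun k : ℕ => hIter φ (P * k) x) atTop (𝓝 y)) {u : ℕ → ℕ}
    (hu : Tendsto u atTop atTop) (r : ℤ) :
    Tendsto (fun i => hIter φ (P * u i + r) x) atTop (𝓝 (hIter φ r y)) :=
  (((continuous_hIter φ r).tendsto y).comp (h.comp hu)).congr fun i => by
    rw [add_comm, hIter_add]
    rfl

theorem hIter_eq_self_of_tendsto [T2Space Z] {P : ℤ} {x y : Z}
    (h : Tendsto (fun k : ℕ => hIter φ (P * k) x) atTop (𝓝 y)) : hIter φ P y = y := by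
  refine tendsto_nhds_unique (tendsto_hIter_mul_add h tendsto_id P) ?_
  refine (h.comp (tendsto_add_atTop_nat 1)).congr fun k => ?_
  simp only [Function.comp, id, Nat.cast_add, Nat.cast_one, mul_add, mul_one]

end Iterates

theorem exists_strictMono_forall_eq {β : Type*} [Finite β] (f : ℕ → β) :
    ∃ b, ∃ g : ℕ → ℕ, StrictMono g ∧ ∀ i, f (g i) = b := by
  obtain ⟨b, hb⟩ := Finite.exists_infinite_fiber f
  obtain ⟨g, hg, hgb⟩ := extraction_of_frequently_atTop
    (Nat.frequently_atTop_iff_infinite.2 (Set.infinite_coe_iff.1 hb))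
  exact ⟨b, g, hg, hgb⟩

section Metric

variable {Z : Type*} [MetricSpace Z] {φ : Z ≃ₜ Z}

theorem eq_of_mem_asympS_of_hIter_eq_self {P : ℤ} (hP : 0 < P) {y z : Z}
    (hz : hIter φ P z = z) (hy : hIter φ P y = y) (h : (z, y) ∈ asympS φ) : z = y := by
  lift P to ℕ using hP.le
  have hmul : Tendsto (fun k : ℕ => P * k) atTop atTop :=
    (strictMono_mul_left_of_pos (by omega)).tendsto_atTop
  have hconst : Tendsto (fun _ : ℕ => dist z y) atTop (𝓝 0) := (h.comp hmul).congr fun k => by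
    simp only [Function.comp, Nat.cast_mul, hIter_mul_eq_self hz, hIter_mul_eq_self hy]
  exact dist_eq_zero.1 (tendsto_nhds_unique tendsto_const_nhds hconst)

theorem hIter_eq_self_of_mem_asympS {P : ℤ} (hP : 0 < P) {y : Z} (hy : hIter φ P y = y)
    {q : ℤ} (h : (hIter φ q y, y) ∈ asympS φ) : hIter φ q y = y := by
  refine eq_of_mem_asympS_of_hIter_eq_self hP ?_ hy h
  rw [← hIter_add, add_comm, hIter_add, hy]

variable (φ)

theorem asympU_eq_asympS_symm : asympU φ = asympS φ.symm := by
  ext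
  simp only [asympU, asympS, mem_ofPred_eq, hIter_symm]

theorem alphaSet_eq_omegaSet_symm (x : Z) : alphaSet φ x = omegaSet φ.symm x := by
  ext z
  constructor
  · rintro ⟨n, hn, hz⟩
    have hbound : ∀ i : ℕ, n i + i ≤ n 0 := by
      intro i
      induction i with
      | zero => simp
      | succ i ih =>
        have := hn (Nat.lt_add_one i)
        push_cast
        omega
    obtain ⟨i₀, hi₀⟩ : ∃ i₀ : ℕ, n 0 ≤ i₀ := ⟨(n 0).toNat, Int.self_le_toNat _⟩
    refine ⟨fun i => (-n (i + i₀)).toNat, fun a b hab => ?_, ?_⟩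
    · show (-n (a + i₀)).toNat < (-n (b + i₀)).toNat
      have := hn (show a + i₀ < b + i₀ by omega)
      have := hbound (a + i₀)
      omega
    · refine (hz.comp (tendsto_add_atTop_nat i₀)).congr fun i => ?_
      have := hbound (i + i₀)
      simp only [Function.comp, hIter_symm]
      congr 1
      omega
  · rintro ⟨m, hm, hz⟩
    exact ⟨fun i => -(m i : ℤ), fun a b hab => by simpa using hm hab,
      by simpa only [hIter_symm] using hz⟩

variable {φ}

theorem omegaSet_eq_range_of_tendsto {P : ℤ} (hP : 0 < P) {x y : Z}
    (h : Tendsto (fun k : ℕ => hIter φ (P * k) x) atTop (𝓝 y)) :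
    omegaSet φ x = range fun j : ℤ => hIter φ j y := by
  have hy := hIter_eq_self_of_tendsto h
  lift P to ℕ using hP.le
  have hP0 : P ≠ 0 := by omega
  refine Subset.antisymm ?_ ?_
  · rintro z ⟨n, hn, hz⟩
    obtain ⟨r, g, hg, hr⟩ := exists_strictMono_forall_eq fun i =>
      (⟨n i % P, Nat.mod_lt _ (Nat.pos_of_ne_zero hP0)⟩ : Fin P)
    have hq : Tendsto (fun i => n (g i) / P) atTop atTop :=
      (Nat.tendsto_div_const_atTop hP0).comp (hn.comp hg).tendsto_atTop
    refine ⟨r, tendsto_nhds_unique ((tendsto_hIter_mul_add h hq r).congr fun i => ?_)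
      (hz.comp hg.tendsto_atTop)⟩
    have hdiv := Nat.div_add_mod (n (g i)) P
    rw [show n (g i) % P = r from Fin.ext_iff.1 (hr i)] at hdiv
    show _ = hIter φ (n (g i) : ℕ) x
    congr 1
    exact_mod_cast hdiv
  · rintro _ ⟨j, rfl⟩
    show hIter φ j y ∈ omegaSet φ x
    rw [← hIter_emod_eq hy j]
    lift j % (P : ℤ) to ℕ using Int.emod_nonneg j (by omega) with r
    refine ⟨fun k => P * k + r, (strictMono_mul_left_of_pos (by omega)).add_const r, ?_⟩
    refine (tendsto_hIter_mul_add h tendsto_id r).congr fun k => ?_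
    push_cast
    rfl

end Metric

theorem omega_alpha_limit_sets_general {X : Type*} [MetricSpace X] [CompactSpace X]
    (S : SmaleSpace X) (x : X) (p : ℤ) (hp : p ≠ 0)
    (ys yu : X)
    (hys : Tendsto (fun k : ℕ => hIter S.phi (|p| * k) x) atTop (nhds ys))
    (hyu : Tendsto (fun k : ℕ => hIter S.phi (-(|p| * k)) x) atTop (nhds yu))
    (ps pu : ℤ)
    (hps : IsLeast {q : ℤ | 0 < q ∧ (hIter S.phi q ys, ys) ∈ asympA S.phi} ps)
    (hpu : IsLeast {q : ℤ | 0 < q ∧ (hIter S.phi q yu, yu) ∈ asympA S.phi} pu) :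
    omegaSet S.phi x = {z | ∃ j : ℤ, 0 ≤ j ∧ j < ps ∧ z = hIter S.phi j ys} ∧
    alphaSet S.phi x = {z | ∃ j : ℤ, 0 ≤ j ∧ j < pu ∧ z = hIter S.phi j yu} := by
  have hP : 0 < |p| := abs_pos.2 hp
  have hyu' : Tendsto (fun k : ℕ => hIter S.phi.symm (|p| * k) x) atTop (𝓝 yu) := by
    simpa only [hIter_symm] using hyu
  have hps_per : hIter S.phi ps ys = ys :=
    hIter_eq_self_of_mem_asympS hP (hIter_eq_self_of_tendsto hys) hps.1.2.1
  have hpu_per : hIter S.phi pu yu = yu := by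
    have hmem : (hIter S.phi.symm (-pu) yu, yu) ∈ asympS S.phi.symm := by
      rw [← asympU_eq_asympS_symm, hIter_symm, neg_neg]
      exact hpu.1.2.2
    simpa only [hIter_symm, neg_neg] using
      hIter_eq_self_of_mem_asympS hP (hIter_eq_self_of_tendsto hyu') hmem
  constructor
  · rw [omegaSet_eq_range_of_tendsto hP hys, setOf_hIter_Ico_eq_range hps.1.1 hps_per]
  · rw [alphaSet_eq_omegaSet_symm, omegaSet_eq_range_of_tendsto hP hyu', range_hIter_symm,
      setOf_hIter_Ico_eq_range hpu.1.1 hpu_per]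

/-- For an asymptotic `p`-periodic point `x`, the `ω`-limit set of `x` is
the `φ`-orbit `{η^s(x), …, φ^{p_s-1}(η^s(x))}` and the `α`-limit set of `x` is
`{η^u(x), …, φ^{p_u-1}(η^u(x))}`. -/
theorem omega_alpha_limit_sets {X : Type*} [MetricSpace X] [CompactSpace X]
    (S : SmaleSpace X) (x : X) (p : ℤ) (hp : p ≠ 0)
    (hx : (hIter S.phi p x, x) ∈ asympA S.phi)
    (ys yu : X)
    (hys : Tendsto (fun k : ℕ => hIter S.phi (|p| * k) x) atTop (nhds ys))
    (hyu : Tendsto (fun k : ℕ => hIter S.phi (-(|p| * k)) x) atTop (nhds yu))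
    (ps pu : ℤ)
    (hps : IsLeast {q : ℤ | 0 < q ∧ (hIter S.phi q ys, ys) ∈ asympA S.phi} ps)
    (hpu : IsLeast {q : ℤ | 0 < q ∧ (hIter S.phi q yu, yu) ∈ asympA S.phi} pu) :
    omegaSet S.phi x = {z | ∃ j : ℤ, 0 ≤ j ∧ j < ps ∧ z = hIter S.phi j ys} ∧
    alphaSet S.phi x = {z | ∃ j : ℤ, 0 ≤ j ∧ j < pu ∧ z = hIter S.phi j yu} :=
  omega_alpha_limit_sets_general S x p hp ys yu hys hyu ps pu hps hpu
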